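/- arXiv:1809.04238 — 2 statements merged into one kernel-verified Lean document; each statement's English description precedes it below -/
import Mathlib

section
/- Let d ∈ {1,2,3} and p = p(d) (p(1) = 3, p(2) = 2√2, p(3) = (1+√17)/2). Suppose u₁, u₂ : (1,∞) → ℝ are nonnegative, twice differentiable, both satisfy the radial equation w''(r) + ((d−1)/r)·w'(r) = w(r)² for all r > 1, u₂(r) ≤ u₁(r) and u₂(r) ≥ 2(4−d)/r² for all r > 1, and u₁(r) → 0 as r → ∞. Then for all R and r with 1 < R ≤ r, one has u₁(r) − u₂(r) ≤ (R/r)^p · (u₁(R) − u₂(R)). -/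
/-!
With `D = u₁ - u₂ ≥ 0` and `φ(x) = C x^(-p)`, `C = D(R) R^p`, the radial Laplacian `L` satisfies
`L D = (u₁ + u₂) D ≥ V D` for `V = 4(4-d)/x²` (because `u₁ + u₂ ≥ 2 u₂ ≥ V`), while the defining
equation `p² - (d-2)p = 4(4-d)` of the critical exponent makes `L φ = V φ`. Hence `w = D - φ`
satisfies `L w ≥ V w > 0` wherever `w > 0`. Since `w(R) = 0` and `w → 0` at infinity, a positive
value of `w` would produce an interior maximum, where `w' = 0` and `w'' = L w > 0`: impossible.
-/

open Real Filter Set Topology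

theorem IsLocalMax.deriv_deriv_nonpos {f : ℝ → ℝ} {x₀ : ℝ} (hmax : IsLocalMax f x₀)
    (hc : ContinuousAt f x₀) : deriv (deriv f) x₀ ≤ 0 := by
  by_contra! hpos
  have hmin := isLocalMin_of_deriv_deriv_pos hpos hmax.deriv_eq_zero hc
  have hconst : f =ᶠ[𝓝 x₀] fun _ => f x₀ :=
    (hmin.and hmax).mono fun _ h => le_antisymm h.2 h.1
  simp [hconst.deriv.deriv_eq] at hpos

theorem exists_isLocalMax_pos_of_tendsto_zero {w : ℝ → ℝ} {R x₀ : ℝ}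
    (hcont : ContinuousOn w (Ici R)) (hR : w R ≤ 0) (hlim : Tendsto w atTop (𝓝 0))
    (hx₀ : R ≤ x₀) (hwx₀ : 0 < w x₀) : ∃ c > R, IsLocalMax w c ∧ 0 < w c := by
  have hcocompact : cocompact ℝ ⊓ 𝓟 (Ici R) ≤ atTop := by
    rw [cocompact_eq_atBot_atTop, inf_sup_right, (disjoint_atBot_principal_Ici R).eq_bot,
      bot_sup_eq]
    exact inf_le_left
  obtain ⟨c, hc, hmax⟩ := hcont.exists_isMaxOn' isClosed_Ici hx₀
    (hcocompact (hlim.eventually (eventually_le_nhds hwx₀)))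
  have hwc : 0 < w c := hwx₀.trans_le (hmax hx₀)
  have hRc : R < c := lt_of_le_of_ne hc (by rintro rfl; linarith)
  exact ⟨c, hRc, hmax.isLocalMax (Ici_mem_nhds hRc), hwc⟩

noncomputable def radialLaplacian (d : ℝ) (f : ℝ → ℝ) (x : ℝ) : ℝ :=
  deriv (deriv f) x + (d - 1) / x * deriv f x

section TwiceDifferentiable

variable {f g : ℝ → ℝ} {s : Set ℝ}

theorem eqOn_deriv_sub (hs : IsOpen s) (hf : DifferentiableOn ℝ f s)
    (hg : DifferentiableOn ℝ g s) : EqOn (deriv (f - g)) (deriv f - deriv g) s :=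
  fun _ hx =>
    deriv_sub (hf.differentiableAt (hs.mem_nhds hx)) (hg.differentiableAt (hs.mem_nhds hx))

theorem differentiableOn_deriv_sub (hs : IsOpen s) (hf : DifferentiableOn ℝ f s)
    (hg : DifferentiableOn ℝ g s) (hf' : DifferentiableOn ℝ (deriv f) s)
    (hg' : DifferentiableOn ℝ (deriv g) s) : DifferentiableOn ℝ (deriv (f - g)) s :=
  (hf'.sub hg').congr (eqOn_deriv_sub hs hf hg)

theorem radialLaplacian_sub (d : ℝ) (hs : IsOpen s) (hf : DifferentiableOn ℝ f s)
    (hg : DifferentiableOn ℝ g s) (hf' : DifferentiableOn ℝ (deriv f) s)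
    (hg' : DifferentiableOn ℝ (deriv g) s) {x : ℝ} (hx : x ∈ s) :
    radialLaplacian d (f - g) x = radialLaplacian d f x - radialLaplacian d g x := by
  have hx' := hs.mem_nhds hx
  have hderiv := eqOn_deriv_sub hs hf hg
  rw [radialLaplacian, radialLaplacian, radialLaplacian,
    (hderiv.eventuallyEq_of_mem hx').deriv_eq, hderiv hx,
    deriv_sub (hf'.differentiableAt hx') (hg'.differentiableAt hx')]
  simp only [Pi.sub_apply]
  ring

end TwiceDifferentiable

theorem deriv_const_mul_rpow (C p : ℝ) :
    deriv (fun x : ℝ => C * x ^ p) = fun x => C * p * x ^ (p - 1) := by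
  ext x
  simp only [deriv_const_mul_field', Real.deriv_rpow_const, mul_assoc]

theorem differentiableOn_const_mul_rpow (C p : ℝ) :
    DifferentiableOn ℝ (fun x : ℝ => C * x ^ p) (Ioi 0) :=
  ((Real.differentiableOn_rpow_const p).mono fun _ hx => ne_of_gt hx).const_mul C

theorem radialLaplacian_const_mul_rpow_neg (d C p : ℝ) {x : ℝ} (hx : 0 < x) :
    radialLaplacian d (fun x => C * x ^ (-p)) x =
      (p ^ 2 - (d - 2) * p) / x ^ 2 * (C * x ^ (-p)) := by
  simp only [radialLaplacian, deriv_const_mul_rpow]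
  have h1 : x ^ (-p - 1) = x ^ (-p) / x := by rw [Real.rpow_sub hx, Real.rpow_one]
  have h2 : x ^ (-p - 1 - 1) = x ^ (-p) / x ^ 2 := by
    rw [sub_sub, Real.rpow_sub hx, one_add_one_eq_two, Real.rpow_two]
  rw [h1, h2]
  field_simp
  ring

theorem nonpos_of_radialLaplacian_pos {d R : ℝ} {w : ℝ → ℝ}
    (hcont : ContinuousOn w (Ici R)) (hR : w R ≤ 0) (hlim : Tendsto w atTop (𝓝 0))
    (hsub : ∀ x > R, 0 < w x → 0 < radialLaplacian d w x) : ∀ x ≥ R, w x ≤ 0 := by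
  intro x₀ hx₀
  by_contra! hwx₀
  obtain ⟨c, hRc, hmax, hwc⟩ := exists_isLocalMax_pos_of_tendsto_zero hcont hR hlim hx₀ hwx₀
  have h := hsub c hRc hwc
  rw [radialLaplacian, hmax.deriv_eq_zero, mul_zero, add_zero] at h
  exact h.not_ge (hmax.deriv_deriv_nonpos (hcont.continuousAt (Ici_mem_nhds hRc)))

section Comparison

variable {d p a : ℝ} {u₁ u₂ : ℝ → ℝ}

theorem radialLaplacian_sub_sub_const_mul_rpow_neg (ha : 0 ≤ a)
    (hU₁ : DifferentiableOn ℝ u₁ (Ioi a)) (hU₂ : DifferentiableOn ℝ u₂ (Ioi a))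
    (hU₁' : DifferentiableOn ℝ (deriv u₁) (Ioi a)) (hU₂' : DifferentiableOn ℝ (deriv u₂) (Ioi a))
    (C : ℝ) {x : ℝ} (hx : a < x) :
    radialLaplacian d (u₁ - u₂ - fun y => C * y ^ (-p)) x =
      radialLaplacian d u₁ x - radialLaplacian d u₂ x -
        (p ^ 2 - (d - 2) * p) / x ^ 2 * (C * x ^ (-p)) := by
  have hΦ : DifferentiableOn ℝ (fun y => C * y ^ (-p)) (Ioi a) :=
    (differentiableOn_const_mul_rpow _ _).mono (Ioi_subset_Ioi ha)
  have hΦ' : DifferentiableOn ℝ (deriv fun y => C * y ^ (-p)) (Ioi a) := by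
    rw [deriv_const_mul_rpow]
    exact (differentiableOn_const_mul_rpow _ _).mono (Ioi_subset_Ioi ha)
  rw [radialLaplacian_sub _ isOpen_Ioi (hU₁.sub hU₂) hΦ
      (differentiableOn_deriv_sub isOpen_Ioi hU₁ hU₂ hU₁' hU₂') hΦ' hx,
    radialLaplacian_sub _ isOpen_Ioi hU₁ hU₂ hU₁' hU₂' hx,
    radialLaplacian_const_mul_rpow_neg _ _ _ (ha.trans_lt hx)]

theorem sub_le_const_mul_rpow_neg_of_radialLaplacian_eq_sq (ha : 0 ≤ a) (hd : d < 4)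
    (hp : 0 < p) (hpd : p ^ 2 - (d - 2) * p = 4 * (4 - d))
    (hU₁ : DifferentiableOn ℝ u₁ (Ioi a)) (hU₂ : DifferentiableOn ℝ u₂ (Ioi a))
    (hU₁' : DifferentiableOn ℝ (deriv u₁) (Ioi a)) (hU₂' : DifferentiableOn ℝ (deriv u₂) (Ioi a))
    (h₁eq : ∀ x > a, radialLaplacian d u₁ x = u₁ x ^ 2)
    (h₂eq : ∀ x > a, radialLaplacian d u₂ x = u₂ x ^ 2)
    (h₂nonneg : ∀ x > a, 0 ≤ u₂ x) (hle : ∀ x > a, u₂ x ≤ u₁ x)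
    (hlb : ∀ x > a, 2 * (4 - d) / x ^ 2 ≤ u₂ x) (hlim : Tendsto u₁ atTop (𝓝 0))
    {R : ℝ} (hR : a < R) : ∀ x ≥ R, u₁ x - u₂ x ≤ (u₁ R - u₂ R) * R ^ p * x ^ (-p) := by
  set C := (u₁ R - u₂ R) * R ^ p
  suffices hw : ∀ x ≥ R, (u₁ - u₂ - fun y => C * y ^ (-p)) x ≤ 0 from
    fun x hx => by simpa [sub_nonpos] using hw x hx
  refine nonpos_of_radialLaplacian_pos (d := d) ?_ ?_ ?_ fun x hx hwx => ?_
  · exact ((hU₁.sub hU₂).sub ((differentiableOn_const_mul_rpow _ _).mono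
      (Ioi_subset_Ioi ha))).continuousOn.mono (Ici_subset_Ioi.mpr hR)
  · have hRp : R ^ p * R ^ (-p) = 1 := by
      rw [← Real.rpow_add (ha.trans_lt hR), add_neg_cancel, Real.rpow_zero]
    simp [C, mul_assoc, hRp]
  · have hu₂ : Tendsto u₂ atTop (𝓝 0) :=
      tendsto_of_tendsto_of_tendsto_of_le_of_le' tendsto_const_nhds hlim
        (eventually_gt_atTop a |>.mono h₂nonneg) (eventually_gt_atTop a |>.mono hle)
    rw [show (0 : ℝ) = 0 - 0 - C * 0 by ring]
    exact (hlim.sub hu₂).sub ((tendsto_rpow_neg_atTop hp).const_mul _)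
  · have hxa : x > a := hR.trans hx
    have hV : 0 < 4 * (4 - d) / x ^ 2 := div_pos (by linarith) (pow_pos (ha.trans_lt hxa) 2)
    have hVu : 4 * (4 - d) / x ^ 2 ≤ u₂ x + u₁ x := by
      linarith [hlb x hxa, hle x hxa, show 4 * (4 - d) / x ^ 2 = 2 * (2 * (4 - d) / x ^ 2) by ring]
    simp only [Pi.sub_apply] at hwx
    rw [radialLaplacian_sub_sub_const_mul_rpow_neg ha hU₁ hU₂ hU₁' hU₂' C hxa, h₁eq x hxa,
      h₂eq x hxa, hpd]
    nlinarith [mul_le_mul_of_nonneg_right hVu (sub_nonneg.mpr (hle x hxa)), mul_pos hV hwx]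

end Comparison

theorem critical_exponent_spec {d : ℕ} {p : ℝ}
    (hp : (d = 1 ∧ p = 3) ∨ (d = 2 ∧ p = 2 * Real.sqrt 2) ∨
      (d = 3 ∧ p = (1 + Real.sqrt 17) / 2)) :
    0 < p ∧ p ^ 2 - ((d : ℝ) - 2) * p = 4 * (4 - d) ∧ (d : ℝ) < 4 := by
  rcases hp with ⟨rfl, rfl⟩ | ⟨rfl, rfl⟩ | ⟨rfl, rfl⟩
  · norm_num
  · refine ⟨by positivity, ?_, by norm_num⟩
    push_cast
    linear_combination 4 * Real.sq_sqrt (show (0 : ℝ) ≤ 2 by norm_num)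
  · refine ⟨by positivity, ?_, by norm_num⟩
    push_cast
    linear_combination Real.sq_sqrt (show (0 : ℝ) ≤ 17 by norm_num) / 4

theorem stmt7_general (d : ℕ) (p : ℝ)
    (hp : (d = 1 ∧ p = 3) ∨ (d = 2 ∧ p = 2 * Real.sqrt 2) ∨
      (d = 3 ∧ p = (1 + Real.sqrt 17) / 2))
    (u₁ u₂ : ℝ → ℝ)
    (h₂nonneg : ∀ r > (1 : ℝ), 0 ≤ u₂ r)
    (h₁diff : ∀ r > (1 : ℝ), DifferentiableAt ℝ u₁ r)
    (h₁diff' : ∀ r > (1 : ℝ), DifferentiableAt ℝ (deriv u₁) r)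
    (h₂diff : ∀ r > (1 : ℝ), DifferentiableAt ℝ u₂ r)
    (h₂diff' : ∀ r > (1 : ℝ), DifferentiableAt ℝ (deriv u₂) r)
    (h₁eq : ∀ r > (1 : ℝ),
      deriv (deriv u₁) r + ((d : ℝ) - 1) / r * deriv u₁ r = (u₁ r) ^ 2)
    (h₂eq : ∀ r > (1 : ℝ),
      deriv (deriv u₂) r + ((d : ℝ) - 1) / r * deriv u₂ r = (u₂ r) ^ 2)
    (hle : ∀ r > (1 : ℝ), u₂ r ≤ u₁ r)
    (hlb : ∀ r > (1 : ℝ), 2 * (4 - (d : ℝ)) / r ^ 2 ≤ u₂ r)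
    (hlim : Tendsto u₁ atTop (nhds 0)) :
    ∀ R r : ℝ, 1 < R → R ≤ r →
      u₁ r - u₂ r ≤ (R / r) ^ p * (u₁ R - u₂ R) := by
  obtain ⟨hp0, hpd, hd4⟩ := critical_exponent_spec hp
  intro R r hR hRr
  have hbound := sub_le_const_mul_rpow_neg_of_radialLaplacian_eq_sq zero_le_one hd4 hp0 hpd
    (fun x hx => (h₁diff x hx).differentiableWithinAt)
    (fun x hx => (h₂diff x hx).differentiableWithinAt)
    (fun x hx => (h₁diff' x hx).differentiableWithinAt)
    (fun x hx => (h₂diff' x hx).differentiableWithinAt)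
    h₁eq h₂eq h₂nonneg hle hlb hlim hR r hRr
  convert hbound using 1
  rw [Real.div_rpow (by linarith) (by linarith), Real.rpow_neg (by linarith)]
  ring

/-- Proposition 4.3(a), radial form: upper bound `u₁(r) - u₂(r) ≤ (R/r)^p (u₁(R) - u₂(R))`
for two solutions of the radial equation with `u₂ ≥ 2(4-d)/r²`. -/
theorem stmt7 (d : ℕ) (hd : d = 1 ∨ d = 2 ∨ d = 3) (p : ℝ)
    (hp : (d = 1 ∧ p = 3) ∨ (d = 2 ∧ p = 2 * Real.sqrt 2) ∨
      (d = 3 ∧ p = (1 + Real.sqrt 17) / 2))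
    (u₁ u₂ : ℝ → ℝ)
    (h₁nonneg : ∀ r > (1 : ℝ), 0 ≤ u₁ r) (h₂nonneg : ∀ r > (1 : ℝ), 0 ≤ u₂ r)
    (h₁diff : ∀ r > (1 : ℝ), DifferentiableAt ℝ u₁ r)
    (h₁diff' : ∀ r > (1 : ℝ), DifferentiableAt ℝ (deriv u₁) r)
    (h₂diff : ∀ r > (1 : ℝ), DifferentiableAt ℝ u₂ r)
    (h₂diff' : ∀ r > (1 : ℝ), DifferentiableAt ℝ (deriv u₂) r)
    (h₁eq : ∀ r > (1 : ℝ),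
      deriv (deriv u₁) r + ((d : ℝ) - 1) / r * deriv u₁ r = (u₁ r) ^ 2)
    (h₂eq : ∀ r > (1 : ℝ),
      deriv (deriv u₂) r + ((d : ℝ) - 1) / r * deriv u₂ r = (u₂ r) ^ 2)
    (hle : ∀ r > (1 : ℝ), u₂ r ≤ u₁ r)
    (hlb : ∀ r > (1 : ℝ), 2 * (4 - (d : ℝ)) / r ^ 2 ≤ u₂ r)
    (hlim : Tendsto u₁ atTop (nhds 0)) :
    ∀ R r : ℝ, 1 < R → R ≤ r →
      u₁ r - u₂ r ≤ (R / r) ^ p * (u₁ R - u₂ R) :=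
  stmt7_general d p hp u₁ u₂ h₂nonneg h₁diff h₁diff' h₂diff h₂diff' h₁eq h₂eq hle hlb hlim
end

section
/- Fix a dimension d ≥ 1, R > 0, r ≥ 0 and a nonempty compact set K₀ ⊆ ℝ^d. The set S₂ = {K ∈ 𝒦 : K₀ ⊆ cthickening_r(K ∩ closedBall(0,R))} is closed in 𝒦, where cthickening_r(S) = {x ∈ ℝ^d : dist(x, S) ≤ r} is the closed r-thickening of S. -/
open TopologicalSpace Metric

/-! Since `K ∩ B` is compact, `x ∈ cthickening r (K ∩ B)` means that `K` meets the closed set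
`B ∩ closedBall x r`. So the set in question is an intersection, over `x ∈ K₀`, of sets
`{K | (K ∩ F).Nonempty}` with `F` closed, each of which is closed in the Vietoris topology,
i.e. in the Hausdorff metric topology. -/

theorem IsCompact.mem_cthickening_iff_inter_closedBall_nonempty {α : Type*}
    [PseudoMetricSpace α] {s : Set α} (hs : IsCompact s) {r : ℝ} (hr : 0 ≤ r) {x : α} :
    x ∈ cthickening r s ↔ (s ∩ closedBall x r).Nonempty := by
  simp only [hs.cthickening_eq_biUnion_closedBall hr, Set.mem_iUnion₂, exists_prop,
    Set.Nonempty, Set.mem_inter_iff, mem_closedBall, dist_comm x]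

theorem NonemptyCompacts.isClosed_setOf_subset_cthickening_inter {α : Type*}
    [PseudoMetricSpace α] (s : Set α) {B : Set α} (hB : IsClosed B) {r : ℝ} (hr : 0 ≤ r) :
    IsClosed {K : NonemptyCompacts α | s ⊆ cthickening r ((K : Set α) ∩ B)} := by
  have hfiber : ∀ (K : NonemptyCompacts α) (x : α),
      x ∈ cthickening r ((K : Set α) ∩ B) ↔ ((K : Set α) ∩ (B ∩ closedBall x r)).Nonempty :=
    fun K x => by
      rw [(K.isCompact.inter_right hB).mem_cthickening_iff_inter_closedBall_nonempty hr,
        Set.inter_assoc]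
  have hset : {K : NonemptyCompacts α | s ⊆ cthickening r ((K : Set α) ∩ B)} =
      ⋂ x ∈ s, {K : NonemptyCompacts α | ((K : Set α) ∩ (B ∩ closedBall x r)).Nonempty} := by
    ext K
    simp only [Set.mem_ofPred_eq, Set.mem_iInter₂, Set.subset_def, hfiber]
  rw [hset]
  exact isClosed_biInter fun x _ =>
    NonemptyCompacts.isClosed_inter_nonempty_of_isClosed (hB.inter isClosed_closedBall)

theorem stmt11_general (d : ℕ) (R r : ℝ) (hr : 0 ≤ r)
    (K₀ : Set (EuclideanSpace ℝ (Fin d))) :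
    IsClosed {K : NonemptyCompacts (EuclideanSpace ℝ (Fin d)) |
      K₀ ⊆ Metric.cthickening r
        ((K : Set (EuclideanSpace ℝ (Fin d))) ∩ Metric.closedBall 0 R)} :=
  NonemptyCompacts.isClosed_setOf_subset_cthickening_inter K₀ isClosed_closedBall hr

/-- Step in Lemma 2.1(a): `S₂ = {K : K₀ ⊆ cthickening_r (K ∩ closedBall(0,R))}` is closed. -/
theorem stmt11 (d : ℕ) (hd : 1 ≤ d) (R r : ℝ) (hR : 0 < R) (hr : 0 ≤ r)
    (K₀ : Set (EuclideanSpace ℝ (Fin d))) (hK₀c : IsCompact K₀) (hK₀ne : K₀.Nonempty) :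
    IsClosed {K : NonemptyCompacts (EuclideanSpace ℝ (Fin d)) |
      K₀ ⊆ Metric.cthickening r
        ((K : Set (EuclideanSpace ℝ (Fin d))) ∩ Metric.closedBall 0 R)} :=
  stmt11_general d R r hr K₀
end
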